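/- If h : (0,∞) → ℝ is concave, then the map A ↦ Tr h(A) on positive definite n×n matrices is concave: Tr h((A+B)/2) ≥ (Tr h(A) + Tr h(B))/2 for all positive definite A, B. -/

import Mathlib

open Matrix
open scoped ComplexOrder

noncomputable def trF (f : ℝ → ℝ) {l : ℕ} (A : Matrix (Fin l) (Fin l) ℂ) : ℝ :=
  if hA : A.IsHermitian then ∑ i, f (hA.eigenvalues i) else 0

/-!
Diagonalize `C = (A + B) / 2` by a unitary `V`. In that basis `Tr h(C) = ∑ h(Cᵢᵢ)` and
`Cᵢᵢ = (Aᵢᵢ + Bᵢᵢ) / 2`, so concavity of `h` gives `Tr h(C) ≥ (∑ h(Aᵢᵢ) + ∑ h(Bᵢᵢ)) / 2`.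
Peierls' inequality `∑ h(Aᵢᵢ) ≥ Tr h(A)` then holds in every orthonormal basis: if `U`
diagonalizes `A`, the diagonal of `V⋆ A V` is the eigenvalue vector of `A` averaged by the
doubly stochastic matrix `‖(U⋆ V)ⱼᵢ‖²`, and Jensen's inequality applies to
each diagonal entry.
-/

namespace Matrix

variable {n 𝕜 : Type*} [Fintype n] [DecidableEq n] [RCLike 𝕜]

theorem sum_norm_sq_col_of_mem_unitaryGroup {W : Matrix n n 𝕜} (hW : W ∈ unitaryGroup n 𝕜)
    (i : n) : ∑ j, ‖W j i‖ ^ 2 = 1 := by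
  have h : (star W * W) i i = 1 := by rw [mem_unitaryGroup_iff'.mp hW, one_apply_eq]
  rw [mul_apply] at h
  simp only [star_apply, RCLike.star_def, RCLike.conj_mul] at h
  exact_mod_cast h

theorem sum_norm_sq_row_of_mem_unitaryGroup {W : Matrix n n 𝕜} (hW : W ∈ unitaryGroup n 𝕜)
    (j : n) : ∑ i, ‖W j i‖ ^ 2 = 1 := by
  simpa [star_apply] using sum_norm_sq_col_of_mem_unitaryGroup (Unitary.star_mem hW) j

namespace IsHermitian

variable {A : Matrix n n 𝕜} (hA : A.IsHermitian)

theorem re_star_mul_mul_diag (V : Matrix n n 𝕜) (i : n) :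
    RCLike.re ((star V * A * V) i i) =
      ∑ j, ‖(star (hA.eigenvectorUnitary : Matrix n n 𝕜) * V) j i‖ ^ 2 * hA.eigenvalues j := by
  set U : Matrix n n 𝕜 := ↑hA.eigenvectorUnitary
  have hconj : star V * A * V =
      star (star U * V) * diagonal (RCLike.ofReal ∘ hA.eigenvalues) * (star U * V) := by
    conv_lhs => rw [hA.spectral_theorem, Unitary.conjStarAlgAut_apply]
    simp only [star_mul, star_star, Matrix.mul_assoc]
    rfl
  rw [hconj, Matrix.mul_assoc, mul_apply, map_sum]
  refine Finset.sum_congr rfl fun j _ => ?_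
  rw [diagonal_mul, star_apply, Function.comp_apply, RCLike.star_def, mul_left_comm,
    RCLike.conj_mul]
  norm_cast
  exact mul_comm _ _

theorem eigenvalues_eq_re_star_mul_mul_diag (i : n) :
    hA.eigenvalues i =
      RCLike.re ((star (hA.eigenvectorUnitary : Matrix n n 𝕜) * A * hA.eigenvectorUnitary) i i) := by
  rw [← Unitary.conjStarAlgAut_star_apply (S := 𝕜), hA.conjStarAlgAut_star_eigenvectorUnitary,
    diagonal_apply_eq, Function.comp_apply, RCLike.ofReal_re]

variable {s : Set ℝ} {h : ℝ → ℝ} (hs : ∀ j, hA.eigenvalues j ∈ s) {V : Matrix n n 𝕜}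
  (hV : V ∈ unitaryGroup n 𝕜)
include hs hV

theorem re_star_mul_mul_diag_mem (hsc : Convex ℝ s) (i : n) :
    RCLike.re ((star V * A * V) i i) ∈ s := by
  have hW := mul_mem (Unitary.star_mem hA.eigenvectorUnitary.2) hV
  rw [hA.re_star_mul_mul_diag]
  exact hsc.sum_mem (fun j _ => by positivity) (sum_norm_sq_col_of_mem_unitaryGroup hW i)
    fun j _ => hs j

/-- Peierls' inequality for concave functions. -/
theorem sum_map_eigenvalues_le_sum_map_diag (hh : ConcaveOn ℝ s h) :
    ∑ j, h (hA.eigenvalues j) ≤ ∑ i, h (RCLike.re ((star V * A * V) i i)) := by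
  have hW := mul_mem (Unitary.star_mem hA.eigenvectorUnitary.2) hV
  set W : Matrix n n 𝕜 := star (hA.eigenvectorUnitary : Matrix n n 𝕜) * V
  calc ∑ j, h (hA.eigenvalues j) = ∑ i, ∑ j, ‖W j i‖ ^ 2 * h (hA.eigenvalues j) := by
        rw [Finset.sum_comm]
        simp only [← Finset.sum_mul, sum_norm_sq_row_of_mem_unitaryGroup hW, one_mul]
    _ ≤ ∑ i, h (RCLike.re ((star V * A * V) i i)) := by
        gcongr with i
        rw [hA.re_star_mul_mul_diag]
        simpa only [smul_eq_mul] using hh.le_map_sum (fun j _ => by positivity)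
          (sum_norm_sq_col_of_mem_unitaryGroup hW i) fun j _ => hs j

end IsHermitian
end Matrix

theorem ConcaveOn.mul_trF_add_mul_trF_le {l : ℕ} {s : Set ℝ} {h : ℝ → ℝ}
    (hh : ConcaveOn ℝ s h) {A B : Matrix (Fin l) (Fin l) ℂ} (hA : A.IsHermitian)
    (hB : B.IsHermitian) (hAs : ∀ j, hA.eigenvalues j ∈ s) (hBs : ∀ j, hB.eigenvalues j ∈ s)
    {a b : ℝ} (ha : 0 ≤ a) (hb : 0 ≤ b) (hab : a + b = 1) :
    a * trF h A + b * trF h B ≤ trF h (a • A + b • B) := by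
  have hC : (a • A + b • B).IsHermitian :=
    (hA.smul (IsSelfAdjoint.all a)).add (hB.smul (IsSelfAdjoint.all b))
  set V : Matrix (Fin l) (Fin l) ℂ := ↑hC.eigenvectorUnitary
  have hV : V ∈ unitaryGroup (Fin l) ℂ := hC.eigenvectorUnitary.2
  set dA := fun i => ((star V * A * V) i i).re
  set dB := fun i => ((star V * B * V) i i).re
  have hdiag : ∀ i, hC.eigenvalues i = a * dA i + b * dB i := fun i => by
    simp [hC.eigenvalues_eq_re_star_mul_mul_diag, dA, dB, V, Matrix.mul_add, Matrix.add_mul]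
  rw [trF, trF, trF, dif_pos hA, dif_pos hB, dif_pos hC]
  calc a * ∑ j, h (hA.eigenvalues j) + b * ∑ j, h (hB.eigenvalues j)
      ≤ a * ∑ i, h (dA i) + b * ∑ i, h (dB i) := by
        gcongr ?_ + ?_
        · exact mul_le_mul_of_nonneg_left (hA.sum_map_eigenvalues_le_sum_map_diag hAs hV hh) ha
        · exact mul_le_mul_of_nonneg_left (hB.sum_map_eigenvalues_le_sum_map_diag hBs hV hh) hb
    _ = ∑ i, (a • h (dA i) + b • h (dB i)) := by
        simp only [Finset.mul_sum, Finset.sum_add_distrib, smul_eq_mul]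
    _ ≤ ∑ i, h (hC.eigenvalues i) := by
        gcongr with i
        rw [hdiag]
        exact hh.2 (hA.re_star_mul_mul_diag_mem hAs hV hh.1 i)
          (hB.re_star_mul_mul_diag_mem hBs hV hh.1 i) ha hb hab

theorem stmt3 {n : ℕ} (h : ℝ → ℝ) (hconc : ConcaveOn ℝ (Set.Ioi 0) h)
    (A B : Matrix (Fin n) (Fin n) ℂ) (hA : A.PosDef) (hB : B.PosDef) :
    (trF h A + trF h B) / 2 ≤ trF h (((1:ℝ)/2) • (A + B)) := by
  have := hconc.mul_trF_add_mul_trF_le hA.1 hB.1 hA.eigenvalues_pos hB.eigenvalues_pos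
    (a := 1 / 2) (b := 1 / 2) (by norm_num) (by norm_num) (by norm_num)
  rw [smul_add]
  linarith
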